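/- Let H : ℝ → ℝ be a Schwartz function and N ≥ 1. Then (1/N)·∑_{x ∈ ℤ} (N(H((x+1)/N) − H(x/N)))² converges to ∫_ℝ H'(u)² du as N → ∞. -/

import Mathlib

/-!
With `b = ⌊N u⌋ / N`, the sum `(1/N) ∑ₓ (N (H((x+1)/N) - H(x/N)))²` is exactly the integral
over `u` of the square of the step function `N (H(b + 1/N) - H(b))`, because each cell
`[x/N, (x+1)/N)` has length `1/N`. Both `b` and `b + 1/N` tend to `u`, so by strict
differentiability of `H` the step function tends to `H'(u)`. By the mean value theorem and the
decay `(1 + |v|) |H'(v)| ≤ C` it is bounded by `2C / (1 + |u|)`, whose square is integrable, so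
dominated convergence concludes.
-/

open Filter MeasureTheory Set Topology

theorem HasStrictDerivAt.tendsto_slope_of_tendsto {𝕜 F α : Type*} [NontriviallyNormedField 𝕜]
    [NormedAddCommGroup F] [NormedSpace 𝕜 F] {f : 𝕜 → F} {f' : F} {x : 𝕜}
    (hf : HasStrictDerivAt f f' x) {l : Filter α} {a b : α → 𝕜}
    (ha : Tendsto a l (𝓝 x)) (hb : Tendsto b l (𝓝 x)) (hab : ∀ᶠ i in l, a i ≠ b i) :
    Tendsto (fun i => (a i - b i)⁻¹ • (f (a i) - f (b i))) l (𝓝 f') := by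
  have hrem := ((hasDerivAtFilter_iff_isLittleO.mp hf).comp_tendsto
    (ha.prodMk_nhds hb)).tendsto_inv_smul_nhds_zero
  refine (zero_add f' ▸ hrem.add_const f').congr' ?_
  filter_upwards [hab] with i hi
  simp [smul_sub, smul_smul, inv_mul_cancel₀ (sub_ne_zero.mpr hi)]

theorem norm_sub_le_of_one_add_abs_mul_norm_deriv_le {E : Type*} [NormedAddCommGroup E]
    [NormedSpace ℝ E] {f : ℝ → E} (hf : Differentiable ℝ f) {C : ℝ}
    (hC : ∀ v, (1 + |v|) * ‖deriv f v‖ ≤ C) {u a b : ℝ} (ha : |a - u| ≤ 1) (hb : |b - u| ≤ 1) :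
    ‖f a - f b‖ ≤ 2 * C / (1 + |u|) * ‖a - b‖ := by
  have hderiv : ∀ v ∈ Icc (u - 1) (u + 1), ‖deriv f v‖ ≤ 2 * C / (1 + |u|) := by
    intro v hv
    have hvu : 1 + |u| ≤ 2 * (1 + |v|) := by
      have := abs_sub_abs_le_abs_sub u v
      have := abs_le.mpr (⟨by linarith [hv.2], by linarith [hv.1]⟩ : -1 ≤ u - v ∧ u - v ≤ 1)
      linarith [abs_nonneg v]
    rw [le_div_iff₀ (by positivity)]
    nlinarith [hC v, mul_le_mul_of_nonneg_left hvu (norm_nonneg (deriv f v))]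
  exact (convex_Icc (u - 1) (u + 1)).norm_image_sub_le_of_norm_deriv_le
    (fun v _ => hf v) hderiv (by rw [mem_Icc]; constructor <;> linarith [abs_le.mp hb])
    (by rw [mem_Icc]; constructor <;> linarith [abs_le.mp ha])

theorem SchwartzMap.exists_one_add_abs_mul_norm_deriv_le {F : Type*} [NormedAddCommGroup F]
    [NormedSpace ℝ F] (f : SchwartzMap ℝ F) : ∃ C, ∀ v, (1 + |v|) * ‖deriv f v‖ ≤ C := by
  refine ⟨2 * (Finset.Iic (1, 1)).sup (fun m => SchwartzMap.seminorm ℝ m.1 m.2) f, fun v => ?_⟩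
  have := one_add_le_sup_seminorm_apply (𝕜 := ℝ) (m := (1, 1)) le_rfl le_rfl f v
  rwa [pow_one, norm_iteratedFDeriv_eq_norm_iteratedDeriv, iteratedDeriv_one,
    Real.norm_eq_abs, pow_one] at this

section RiemannSum

variable {E : Type*} [NormedAddCommGroup E] [NormedSpace ℝ E] [CompleteSpace E] {g : ℤ → E}

theorem integral_comp_intFloor (hg : Integrable fun u : ℝ => g ⌊u⌋) :
    ∫ u : ℝ, g ⌊u⌋ = ∑' n, g n := by
  rw [← setIntegral_univ, ← iUnion_Ico_intCast ℝ,
    integral_iUnion (fun _ => measurableSet_Ico) (pairwise_disjoint_Ico_intCast ℝ) hg.integrableOn]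
  refine tsum_congr fun n => ?_
  rw [setIntegral_congr_fun measurableSet_Ico fun u (hu : u ∈ Ico (n : ℝ) (n + 1)) => by
    rw [Int.floor_eq_iff.mpr hu]]
  simp

theorem integral_comp_intFloor_mul {c : ℝ} (hc : 0 < c)
    (hg : Integrable fun u : ℝ => g ⌊c * u⌋) :
    ∫ u, g ⌊c * u⌋ = c⁻¹ • ∑' n, g n := by
  rw [Measure.integral_comp_mul_left (fun u => g ⌊u⌋), abs_of_pos (inv_pos.mpr hc),
    integral_comp_intFloor ((integrable_comp_mul_left_iff (fun u => g ⌊u⌋) hc.ne').mp hg)]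

end RiemannSum

theorem floor_mul_div_mem_Ioc {c : ℝ} (hc : 0 < c) (u : ℝ) :
    (⌊c * u⌋ : ℝ) / c ∈ Ioc (u - c⁻¹) u := by
  constructor
  · rw [lt_div_iff₀ hc, sub_mul, inv_mul_cancel₀ hc.ne', mul_comm]
    exact Int.sub_one_lt_floor _
  · rw [div_le_iff₀ hc, mul_comm]
    exact Int.floor_le _

theorem tendsto_floor_mul_div (u : ℝ) :
    Tendsto (fun N : ℕ => (⌊(N : ℝ) * u⌋ : ℝ) / N) atTop (𝓝 u) := by
  have hlow : Tendsto (fun N : ℕ => u - (N : ℝ)⁻¹) atTop (𝓝 u) := by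
    simpa using tendsto_const_nhds.sub (tendsto_inv_atTop_nhds_zero_nat (𝕜 := ℝ))
  refine tendsto_of_tendsto_of_tendsto_of_le_of_le' hlow tendsto_const_nhds ?_ ?_ <;>
  filter_upwards [eventually_gt_atTop 0] with N hN
  · exact (floor_mul_div_mem_Ioc (Nat.cast_pos.mpr hN) u).1.le
  · exact (floor_mul_div_mem_Ioc (Nat.cast_pos.mpr hN) u).2

noncomputable def discreteGradient (f : ℝ → ℝ) (N : ℕ) (x : ℤ) : ℝ :=
  N * (f ((x + 1) / N) - f (x / N))

section DiscreteGradient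

variable {f : ℝ → ℝ} {N : ℕ}

theorem discreteGradient_eq (N : ℕ) (x : ℤ) :
    discreteGradient f N x = N * (f (x / N + (N : ℝ)⁻¹) - f (x / N)) := by
  rw [discreteGradient, add_div, one_div]

theorem tendsto_discreteGradient_floor_mul {f' u : ℝ} (hf : HasStrictDerivAt f f' u) :
    Tendsto (fun N : ℕ => discreteGradient f N ⌊N * u⌋) atTop (𝓝 f') := by
  have hb := tendsto_floor_mul_div u
  have ha : Tendsto (fun N : ℕ => (⌊(N : ℝ) * u⌋ : ℝ) / N + (N : ℝ)⁻¹) atTop (𝓝 u) := by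
    simpa using hb.add (tendsto_inv_atTop_nhds_zero_nat (𝕜 := ℝ))
  refine (hf.tendsto_slope_of_tendsto ha hb ?_).congr' ?_ <;>
  filter_upwards [eventually_ne_atTop 0] with N hN
  · simp [hN]
  · simp [discreteGradient_eq]

theorem abs_discreteGradient_floor_mul_le (hf : Differentiable ℝ f) {C : ℝ}
    (hC : ∀ v, (1 + |v|) * ‖deriv f v‖ ≤ C) (hN : N ≠ 0) (u : ℝ) :
    |discreteGradient f N ⌊N * u⌋| ≤ 2 * C / (1 + |u|) := by
  have hNpos : (0 : ℝ) < N := by positivity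
  have hNinv : (N : ℝ)⁻¹ ≤ 1 := inv_le_one_of_one_le₀ (Nat.one_le_cast.mpr (by omega))
  set b : ℝ := (⌊(N : ℝ) * u⌋ : ℝ) / N
  obtain ⟨hub, hbu⟩ := floor_mul_div_mem_Ioc hNpos u
  have hmvt := norm_sub_le_of_one_add_abs_mul_norm_deriv_le hf hC (u := u)
    (a := b + (N : ℝ)⁻¹) (b := b)
    (abs_le.mpr ⟨by linarith, by linarith⟩) (abs_le.mpr ⟨by linarith, by linarith⟩)
  rw [discreteGradient_eq, abs_mul, Nat.abs_cast, ← Real.norm_eq_abs]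
  calc (N : ℝ) * ‖f (b + (N : ℝ)⁻¹) - f b‖
      ≤ N * (2 * C / (1 + |u|) * ‖b + (N : ℝ)⁻¹ - b‖) := by gcongr
    _ = 2 * C / (1 + |u|) := by
        rw [add_sub_cancel_left, Real.norm_of_nonneg (inv_nonneg.mpr hNpos.le)]
        field_simp

theorem sq_discreteGradient_floor_mul_le (hf : Differentiable ℝ f) {C : ℝ}
    (hC : ∀ v, (1 + |v|) * ‖deriv f v‖ ≤ C) (hN : N ≠ 0) (u : ℝ) :
    discreteGradient f N ⌊N * u⌋ ^ 2 ≤ 4 * C ^ 2 * (1 + u ^ 2)⁻¹ :=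
  calc discreteGradient f N ⌊N * u⌋ ^ 2 ≤ (2 * C / (1 + |u|)) ^ 2 := by
        rw [← sq_abs]
        exact pow_le_pow_left₀ (abs_nonneg _) (abs_discreteGradient_floor_mul_le hf hC hN u) 2
    _ = 4 * C ^ 2 * ((1 + |u|) ^ 2)⁻¹ := by rw [div_pow, div_eq_mul_inv]; ring
    _ ≤ 4 * C ^ 2 * (1 + u ^ 2)⁻¹ := by
        gcongr
        nlinarith [abs_nonneg u, sq_abs u]

end DiscreteGradient

/-- Riemann-sum convergence of the squared discrete gradient:
`(1/N)·∑_{x∈ℤ} (N(H((x+1)/N) − H(x/N)))² → ∫ H'(u)² du` as `N → ∞`. -/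
theorem discrete_gradient_square_sum_tendsto (H : SchwartzMap ℝ ℝ) :
    Tendsto
      (fun N : ℕ =>
        (1 / (N : ℝ)) *
          ∑' x : ℤ, ((N : ℝ) * (H (((x : ℝ) + 1) / N) - H ((x : ℝ) / N))) ^ 2)
      atTop (nhds (∫ u : ℝ, (deriv H u) ^ 2)) := by
  obtain ⟨C, hC⟩ := H.exists_one_add_abs_mul_norm_deriv_le
  have hmeas (N : ℕ) : AEStronglyMeasurable fun u : ℝ => discreteGradient H N ⌊N * u⌋ ^ 2 :=
    ((measurable_from_top (f := fun x : ℤ => discreteGradient H N x ^ 2)).comp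
      (Int.measurable_floor.comp (measurable_const_mul _))).aestronglyMeasurable
  have hbound : ∀ᶠ N : ℕ in atTop, ∀ u : ℝ,
      ‖discreteGradient H N ⌊N * u⌋ ^ 2‖ ≤ 4 * C ^ 2 * (1 + u ^ 2)⁻¹ := by
    filter_upwards [eventually_ne_atTop 0] with N hN u
    rw [Real.norm_of_nonneg (sq_nonneg _)]
    exact sq_discreteGradient_floor_mul_le H.differentiable hC hN u
  have hdom := integrable_inv_one_add_sq.const_mul (4 * C ^ 2)
  have hlim := tendsto_integral_filter_of_dominated_convergence _ (Eventually.of_forall hmeas)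
    (hbound.mono fun N h => ae_of_all _ h) hdom
    (ae_of_all _ fun u => (tendsto_discreteGradient_floor_mul
      ((H.smooth 1).contDiffAt.hasStrictDerivAt one_ne_zero)).pow 2)
  refine hlim.congr' ?_
  filter_upwards [hbound, eventually_ne_atTop 0] with N hN hN0
  rw [integral_comp_intFloor_mul (g := fun x => discreteGradient H N x ^ 2) (by positivity)
    (hdom.mono' (hmeas N) (ae_of_all _ hN)), one_div, smul_eq_mul]
  rfl
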